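/- For positive definite 2×2 real matrices, the harmonic mean 2(A^{-1}+B^{-1})^{-1} is less than or equal to the geometric mean A # B, which is less than or equal to the arithmetic mean (A+B)/2, in the Loewner order. -/

import Mathlib

open scoped ComplexOrder

/-- Matrix absolute value via functional calculus: `|X| = (XᴴX)^{1/2}` for Hermitian `X`. -/
noncomputable def matAbs {𝕜 : Type*} [RCLike 𝕜] {m : Type*} [Fintype m] [DecidableEq m]
    (X : Matrix m m 𝕜) : Matrix m m 𝕜 :=
  cfc (fun t : ℝ => |t|) X

/-- Matrix square root via functional calculus. -/
noncomputable def matSqrt {𝕜 : Type*} [RCLike 𝕜] {m : Type*} [Fintype m] [DecidableEq m]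
    (X : Matrix m m 𝕜) : Matrix m m 𝕜 :=
  cfc Real.sqrt X

/-- Matrix geometric mean `A # B = A^{1/2} (A^{-1/2} B A^{-1/2})^{1/2} A^{1/2}`. -/
noncomputable def geomMean {𝕜 : Type*} [RCLike 𝕜] {m : Type*} [Fintype m] [DecidableEq m]
    (A B : Matrix m m 𝕜) : Matrix m m 𝕜 :=
  matSqrt A * matSqrt ((matSqrt A)⁻¹ * B * (matSqrt A)⁻¹) * matSqrt A

/-- Loewner order: `A ≤ B` iff `B - A` is positive semidefinite. -/
def loewnerLE {𝕜 : Type*} [RCLike 𝕜] {m : Type*} [Fintype m] [DecidableEq m]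
    (A B : Matrix m m 𝕜) : Prop :=
  (B - A).PosSemidef

/-!
Conjugating by `S = A^{1/2}` turns the pair `(A, B)` into `(1, C)` with `C = S⁻¹ B S⁻¹`, and all
three means commute with this congruence: `A # B = S C^{1/2} S` by definition, while the harmonic
and arithmetic means are `S (2 (1 + C⁻¹)⁻¹) S` and `S ((1 + C) / 2) S`. For the pair `(1, C)` the
three means are functions of `C`, so by monotonicity of the functional calculus the matrix
inequalities reduce to the scalar ones `2t / (1 + t) ≤ √t ≤ (1 + t) / 2` on the spectrum of `C`.
-/

open scoped MatrixOrder

namespace Matrix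

variable {𝕜 n : Type*} [RCLike 𝕜] [Fintype n] [DecidableEq n]

lemma continuousOn_spectrum (f : ℝ → ℝ) (C : Matrix n n 𝕜) : ContinuousOn f (spectrum ℝ C) :=
  (finite_real_spectrum (A := C)).continuousOn f

lemma isSelfAdjoint_matSqrt (A : Matrix n n 𝕜) : IsSelfAdjoint (matSqrt A) :=
  cfc_predicate _ A

lemma PosSemidef.matSqrt_eq_sqrt {A : Matrix n n 𝕜} (hA : A.PosSemidef) :
    matSqrt A = CFC.sqrt A := by
  rw [CFC.sqrt_eq_real_sqrt A hA.nonneg, cfcₙ_eq_cfc, matSqrt]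

lemma PosSemidef.matSqrt_mul_self {A : Matrix n n 𝕜} (hA : A.PosSemidef) :
    matSqrt A * matSqrt A = A := by
  rw [hA.matSqrt_eq_sqrt, CFC.sqrt_mul_sqrt_self A hA.nonneg]

lemma PosDef.isUnit_matSqrt {A : Matrix n n 𝕜} (hA : A.PosDef) : IsUnit (matSqrt A) := by
  rw [hA.posSemidef.matSqrt_eq_sqrt]
  exact hA.isStrictlyPositive.isUnit_cfcSqrt

lemma PosSemidef.matSqrt_le_half_smul_one_add {C : Matrix n n 𝕜} (hC : C.PosSemidef) :
    matSqrt C ≤ (1 / 2 : ℝ) • (1 + C) := by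
  calc matSqrt C ≤ cfc (fun t : ℝ => 1 / 2 * (1 + t)) C := by
        refine cfc_mono (fun t ht => ?_) (continuousOn_spectrum _ _) (continuousOn_spectrum _ _)
        have ht : 0 ≤ t := spectrum_nonneg_of_nonneg hC.nonneg ht
        nlinarith [Real.sq_sqrt ht, sq_nonneg (Real.sqrt t - 1)]
    _ = (1 / 2 : ℝ) • (1 + C) := by
        rw [cfc_const_mul _ _ _ (continuousOn_spectrum _ _),
          cfc_const_add _ _ _ (continuousOn_spectrum _ _), cfc_id' ℝ C, map_one]

lemma PosDef.two_smul_inv_one_add_inv_le_matSqrt {C : Matrix n n 𝕜} (hC : C.PosDef) :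
    (2 : ℝ) • (1 + C⁻¹)⁻¹ ≤ matSqrt C := by
  have hpos : ∀ t ∈ spectrum ℝ C, 0 < t := fun t ht => hC.isStrictlyPositive.spectrum_pos ht
  calc (2 : ℝ) • (1 + C⁻¹)⁻¹ = cfc (fun t : ℝ => 2 * (1 + t⁻¹)⁻¹) C := by
        rw [cfc_const_mul _ _ _ (continuousOn_spectrum _ _),
          cfc_inv (fun t : ℝ => 1 + t⁻¹) C (fun t ht => by have := hpos t ht; positivity)
            (continuousOn_spectrum _ _),
          cfc_const_add _ _ _ (continuousOn_spectrum _ _), map_one,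
          cfc_ringInverse_id _ hC.isUnit, nonsing_inv_eq_ringInverse, nonsing_inv_eq_ringInverse]
    _ ≤ matSqrt C := by
        refine cfc_mono (fun t ht => ?_) (continuousOn_spectrum _ _) (continuousOn_spectrum _ _)
        have ht := hpos t ht
        rw [show 2 * (1 + t⁻¹)⁻¹ = 2 * t / (t + 1) by field_simp, div_le_iff₀ (by linarith)]
        nlinarith [Real.sq_sqrt ht.le, Real.sqrt_nonneg t, sq_nonneg (Real.sqrt t - 1)]

lemma mul_mul_inv_mul_inv_mul {α : Type*} [CommRing α] {S : Matrix n n α} (hS : IsUnit S)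
    (X : Matrix n n α) : S * (S⁻¹ * X * S⁻¹) * S = X := by
  have hS' : IsUnit S.det := (isUnit_iff_isUnit_det S).mp hS
  simp only [← mul_assoc, mul_nonsing_inv S hS', one_mul]
  simp only [mul_assoc, nonsing_inv_mul S hS', mul_one]

lemma mul_mul_inv_add_mul_mul_inv_inv {α : Type*} [CommRing α] {S : Matrix n n α}
    (hS : IsUnit S) (X Y : Matrix n n α) :
    ((S * X * S)⁻¹ + (S * Y * S)⁻¹)⁻¹ = S * (X⁻¹ + Y⁻¹)⁻¹ * S := by
  have hS' : IsUnit S.det := (isUnit_iff_isUnit_det S).mp hS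
  simp only [mul_inv_rev, nonsing_inv_nonsing_inv S hS', ← Matrix.mul_add, ← Matrix.add_mul,
    mul_assoc]

theorem two_smul_inv_add_inv_inv_le_geomMean {A B : Matrix n n 𝕜} (hA : A.PosDef)
    (hB : B.PosDef) : (2 : ℝ) • (A⁻¹ + B⁻¹)⁻¹ ≤ geomMean A B := by
  set S := matSqrt A
  have hS : IsSelfAdjoint S := isSelfAdjoint_matSqrt A
  have hSunit : IsUnit S := hA.isUnit_matSqrt
  have hC : (S⁻¹ * B * S⁻¹).PosDef := isStrictlyPositive_iff_posDef.mp <|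
    IsStrictlyPositive.conjugate_of_isUnit_of_isSelfAdjoint B S⁻¹
      (isUnit_nonsing_inv_iff.mpr hSunit) hS.isHermitian.inv hB.isStrictlyPositive
  calc (2 : ℝ) • (A⁻¹ + B⁻¹)⁻¹
      = (2 : ℝ) • ((S * 1 * S)⁻¹ + (S * (S⁻¹ * B * S⁻¹) * S)⁻¹)⁻¹ := by
        rw [mul_one, hA.posSemidef.matSqrt_mul_self, mul_mul_inv_mul_inv_mul hSunit]
    _ = S * ((2 : ℝ) • (1 + (S⁻¹ * B * S⁻¹)⁻¹)⁻¹) * S := by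
        rw [mul_mul_inv_add_mul_mul_inv_inv hSunit, inv_one, Matrix.mul_smul, Matrix.smul_mul]
    _ ≤ S * matSqrt (S⁻¹ * B * S⁻¹) * S :=
        hS.conjugate_le_conjugate hC.two_smul_inv_one_add_inv_le_matSqrt
    _ = geomMean A B := rfl

theorem geomMean_le_half_smul_add {A B : Matrix n n 𝕜} (hA : A.PosDef) (hB : B.PosSemidef) :
    geomMean A B ≤ (1 / 2 : ℝ) • (A + B) := by
  set S := matSqrt A
  have hS : IsSelfAdjoint S := isSelfAdjoint_matSqrt A
  have hC : (S⁻¹ * B * S⁻¹).PosSemidef :=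
    nonneg_iff_posSemidef.mp <| hS.isHermitian.inv.isSelfAdjoint.conjugate_nonneg hB.nonneg
  calc geomMean A B = S * matSqrt (S⁻¹ * B * S⁻¹) * S := rfl
    _ ≤ S * ((1 / 2 : ℝ) • (1 + S⁻¹ * B * S⁻¹)) * S :=
        hS.conjugate_le_conjugate hC.matSqrt_le_half_smul_one_add
    _ = (1 / 2 : ℝ) • (S * S + S * (S⁻¹ * B * S⁻¹) * S) := by
        simp only [Matrix.mul_smul, Matrix.smul_mul, Matrix.mul_add, Matrix.add_mul, mul_one]
    _ = (1 / 2 : ℝ) • (A + B) := by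
        rw [hA.posSemidef.matSqrt_mul_self, mul_mul_inv_mul_inv_mul hA.isUnit_matSqrt]

end Matrix

-- `loewnerLE` is definitionally the order `≤` of `MatrixOrder`.
theorem harmonic_le_geom_le_arith (A B : Matrix (Fin 2) (Fin 2) ℝ)
    (hA : A.PosDef) (hB : B.PosDef) :
    loewnerLE ((2 : ℝ) • (A⁻¹ + B⁻¹)⁻¹) (geomMean A B) ∧
      loewnerLE (geomMean A B) ((1 / 2 : ℝ) • (A + B)) :=
  ⟨Matrix.two_smul_inv_add_inv_inv_le_geomMean hA hB,
    Matrix.geomMean_le_half_smul_add hA hB.posSemidef⟩
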